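/- Let L(θ⁰ + Δ) = L₀ + ⟨G, Δ⟩_F + (1/2)·Σ_{j=1}^{IC} h_j·‖Δ_{:,j}‖₂² be the quadratic loss surrogate, and for each column index j define the score s_j = ‖G_{:,j}‖₂²/h_j. Let k ≤ IC and let Ŝ be a set of k column indices such that s_i ≥ s_j for every i ∈ Ŝ and every j ∉ Ŝ (a top-k set for the scores s). Then for every subset S of column indices with |S| = k, inf { L(θ⁰ + Δ) : Δ supported on Ŝ } ≤ inf { L(θ⁰ + Δ) : Δ supported on S }. In particular, among all channel-wise masks of budget k, the mask selecting the top-k columns by the score ‖∇L(θ⁰)_{:,j}‖₂²/h_j minimizes the infimum of the loss. -/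

import Mathlib

/-- The quadratic loss surrogate `L(θ⁰ + Δ) = L₀ + ⟨G, Δ⟩_F + (1/2)·Σⱼ hⱼ·‖Δ_{:,j}‖₂²`. -/
noncomputable def quadLoss {OC IC : ℕ} (G : Matrix (Fin OC) (Fin IC) ℝ) (L₀ : ℝ)
    (h : Fin IC → ℝ) (Δ : Matrix (Fin OC) (Fin IC) ℝ) : ℝ :=
  L₀ + (∑ i, ∑ j, G i j * Δ i j) + (1 / 2) * ∑ j, h j * ∑ i, (Δ i j) ^ 2

/-- `Δ` is supported on the set `S` of column indices: `Δ_{:,j} = 0` for `j ∉ S`. -/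
def SupportedOn {OC IC : ℕ} (Δ : Matrix (Fin OC) (Fin IC) ℝ) (S : Finset (Fin IC)) : Prop :=
  ∀ j ∉ S, ∀ i, Δ i j = 0

/-!
On matrices supported on a column set `T` the surrogate splits into independent column problems
`⟨g, d⟩ + (c/2)‖d‖²`, each minimized by `d = -g/c` with value `-‖g‖²/(2c)`. Hence the infimum over
`T` is attained and equals `L₀ - (1/2) ∑_{j ∈ T} sⱼ`, and choosing `T` reduces to maximizing a sum
of `k` scores, which a top-`k` set does: the `k`-sets `S` and `Ŝ` differ by equally many columns,
and each column of `Ŝ \ S` scores at least as much as each column of `S \ Ŝ`.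
-/

open Finset Matrix

theorem Finset.sum_le_sum_of_card_eq_of_forall_le {ι M : Type*} [AddCommMonoid M] [PartialOrder M]
    [IsOrderedAddMonoid M] (f : ι → M) {S T : Finset ι} (hcard : S.card = T.card)
    (hle : ∀ i ∈ T, ∀ j ∉ T, f j ≤ f i) : ∑ j ∈ S, f j ≤ ∑ j ∈ T, f j := by
  classical
  obtain ⟨e⟩ : Nonempty ((S \ T : Finset ι) ≃ (T \ S : Finset ι)) := by
    rw [← Fintype.card_eq, Fintype.card_coe, Fintype.card_coe, card_sdiff_comm hcard]
  have hsdiff : ∑ j ∈ S \ T, f j ≤ ∑ j ∈ T \ S, f j := calc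
    ∑ j ∈ S \ T, f j = ∑ j : (S \ T : Finset ι), f j := (sum_coe_sort _ f).symm
    _ ≤ ∑ j : (S \ T : Finset ι), f (e j) := Finset.sum_le_sum fun j _ =>
        hle _ (mem_sdiff.mp (e j).2).1 _ (mem_sdiff.mp j.2).2
    _ = ∑ j ∈ T \ S, f j := (e.sum_comp (fun j => f j)).trans (sum_coe_sort _ f)
  rw [← sum_inter_add_sum_sdiff S T, ← sum_inter_add_sum_sdiff T S, inter_comm]
  gcongr

section ColumnProblem

variable {ι : Type*} [Fintype ι]

noncomputable def colLoss (g : ι → ℝ) (c : ℝ) (d : ι → ℝ) : ℝ :=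
  ∑ i, g i * d i + c / 2 * ∑ i, d i ^ 2

@[simp]
theorem colLoss_zero (g : ι → ℝ) (c : ℝ) : colLoss g c 0 = 0 := by
  simp [colLoss]

theorem neg_sum_sq_div_two_le_colLoss (g d : ι → ℝ) {c : ℝ} (hc : 0 < c) :
    -((∑ i, g i ^ 2) / c) / 2 ≤ colLoss g c d := by
  have hsquare : colLoss g c d + (∑ i, g i ^ 2) / c / 2 = c / 2 * ∑ i, (d i + g i / c) ^ 2 := by
    simp only [colLoss, mul_sum, sum_div, ← sum_add_distrib]
    refine sum_congr rfl fun i _ => ?_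
    field_simp
    ring
  have : 0 ≤ c / 2 * ∑ i, (d i + g i / c) ^ 2 := by positivity
  linarith

theorem colLoss_neg_div (g : ι → ℝ) {c : ℝ} (hc : c ≠ 0) :
    colLoss g c (fun i => -g i / c) = -((∑ i, g i ^ 2) / c) / 2 := by
  simp only [colLoss, mul_sum, sum_div, ← sum_neg_distrib, ← sum_add_distrib]
  refine sum_congr rfl fun i _ => ?_
  field_simp
  ring

end ColumnProblem

section QuadLoss

variable {OC IC : ℕ} (G : Matrix (Fin OC) (Fin IC) ℝ) (L₀ : ℝ) (h : Fin IC → ℝ)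

noncomputable def colScore (j : Fin IC) : ℝ :=
  (∑ i, G i j ^ 2) / h j

theorem quadLoss_eq_sum_colLoss (Δ : Matrix (Fin OC) (Fin IC) ℝ) :
    quadLoss G L₀ h Δ = L₀ + ∑ j, colLoss (Gᵀ j) (h j) (Δᵀ j) := by
  simp only [quadLoss, colLoss, transpose_apply, sum_add_distrib, mul_sum]
  rw [sum_comm (γ := Fin OC)]
  ring_nf

theorem quadLoss_eq_sum_colLoss_of_supportedOn {Δ : Matrix (Fin OC) (Fin IC) ℝ}
    {T : Finset (Fin IC)} (hΔ : SupportedOn Δ T) :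
    quadLoss G L₀ h Δ = L₀ + ∑ j ∈ T, colLoss (Gᵀ j) (h j) (Δᵀ j) := by
  rw [quadLoss_eq_sum_colLoss, sum_subset (subset_univ T)]
  intro j _ hj
  have : Δᵀ j = 0 := funext (hΔ j hj)
  rw [this, colLoss_zero]

variable {h}

theorem isLeast_quadLoss_supportedOn (hh : ∀ j, 0 < h j) (T : Finset (Fin IC)) :
    IsLeast {x : ℝ | ∃ Δ : Matrix (Fin OC) (Fin IC) ℝ, SupportedOn Δ T ∧ x = quadLoss G L₀ h Δ}
      (L₀ - (∑ j ∈ T, colScore G h j) / 2) := by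
  have hvalue : L₀ - (∑ j ∈ T, colScore G h j) / 2
      = L₀ + ∑ j ∈ T, -((∑ i, Gᵀ j i ^ 2) / h j) / 2 := by
    simp only [colScore, transpose_apply, ← sum_div, sum_neg_distrib]
    ring
  constructor
  · classical
    refine ⟨fun i j => if j ∈ T then -G i j / h j else 0, fun j hj i => if_neg hj, ?_⟩
    rw [quadLoss_eq_sum_colLoss_of_supportedOn G L₀ h (fun j hj i => if_neg hj), hvalue]
    refine congrArg (L₀ + ·) (sum_congr rfl fun j hj => ?_)
    have hcol : (fun i j => if j ∈ T then -G i j / h j else 0)ᵀ j = fun i => -G i j / h j :=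
      funext fun i => if_pos hj
    rw [hcol]
    exact (colLoss_neg_div (Gᵀ j) (hh j).ne').symm
  · rintro x ⟨Δ, hΔ, rfl⟩
    rw [quadLoss_eq_sum_colLoss_of_supportedOn G L₀ h hΔ, hvalue]
    gcongr with j
    exact neg_sum_sq_div_two_le_colLoss _ _ (hh j)

end QuadLoss

theorem stmt_2_general (OC IC : ℕ) (G : Matrix (Fin OC) (Fin IC) ℝ) (L₀ : ℝ)
    (h : Fin IC → ℝ) (hh : ∀ j, 0 < h j) (k : ℕ)
    (Shat : Finset (Fin IC)) (hShat : Shat.card = k)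
    (htop : ∀ i ∈ Shat, ∀ j ∉ Shat,
      (∑ l, (G l j) ^ 2) / h j ≤ (∑ l, (G l i) ^ 2) / h i) :
    ∀ S : Finset (Fin IC), S.card = k →
      sInf {x : ℝ | ∃ Δ : Matrix (Fin OC) (Fin IC) ℝ, SupportedOn Δ Shat ∧ x = quadLoss G L₀ h Δ} ≤
      sInf {x : ℝ | ∃ Δ : Matrix (Fin OC) (Fin IC) ℝ, SupportedOn Δ S ∧ x = quadLoss G L₀ h Δ} := by
  intro S hS
  rw [(isLeast_quadLoss_supportedOn G L₀ hh Shat).csInf_eq,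
    (isLeast_quadLoss_supportedOn G L₀ hh S).csInf_eq]
  have hscores : ∑ j ∈ S, colScore G h j ≤ ∑ j ∈ Shat, colScore G h j :=
    sum_le_sum_of_card_eq_of_forall_le _ (hS.trans hShat.symm) htop
  linarith

/-- Theorem 1 (optimal weak-column selection): if `Ŝ` is a top-`k` set for the scores
`sⱼ = ‖G_{:,j}‖₂²/hⱼ`, then for every budget-`k` subset `S` of column indices, the infimum of
the quadratic loss surrogate over matrices supported on `Ŝ` is at most the infimum over
matrices supported on `S`. -/
theorem stmt_2 (OC IC : ℕ) (θ0 G : Matrix (Fin OC) (Fin IC) ℝ) (L₀ : ℝ)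
    (h : Fin IC → ℝ) (hh : ∀ j, 0 < h j) (k : ℕ) (hk : k ≤ IC)
    (Shat : Finset (Fin IC)) (hShat : Shat.card = k)
    (htop : ∀ i ∈ Shat, ∀ j ∉ Shat,
      (∑ l, (G l j) ^ 2) / h j ≤ (∑ l, (G l i) ^ 2) / h i) :
    ∀ S : Finset (Fin IC), S.card = k →
      sInf {x : ℝ | ∃ Δ : Matrix (Fin OC) (Fin IC) ℝ, SupportedOn Δ Shat ∧ x = quadLoss G L₀ h Δ} ≤
      sInf {x : ℝ | ∃ Δ : Matrix (Fin OC) (Fin IC) ℝ, SupportedOn Δ S ∧ x = quadLoss G L₀ h Δ} :=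
  stmt_2_general OC IC G L₀ h hh k Shat hShat htop
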